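/- arXiv:2410.22384 — 4 statements merged into one kernel-verified Lean document; each statement's English description precedes it below -/
import Mathlib

section
/- For all real x, exp(x²/2)·∫₀ˣ exp(-t²/2) dt = Σ_{k=0}^∞ x^{2k+1}/(2k+1)!!, where the series converges for all x. -/
/-!
With `I k x = ∫₀ˣ t^(2k) e^(-t²/2) dt`, integrating `d/dt (t^(2k+1) e^(-t²/2))` over `[0, x]`
gives `I (k+1) x = (2k+1) I k x - x^(2k+1) e^(-x²/2)`. Iterating, `I 0 x` equals the first
`N + 1` terms of `e^(-x²/2) Σ x^(2k+1)/(2k+1)‼` plus the remainder `I (N+1) x / (2N+1)‼`.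
The remainder is at most `x² |x|^(2N+1)/(2N+1)‼`, which tends to zero because
`(2k+1)‼ ≥ (2k)‼ = 2^k k!` makes the series absolutely convergent.
-/

open Real Nat Filter Topology

namespace Nat

theorem doubleFactorial_le_succ : ∀ n : ℕ, n‼ ≤ (n + 1)‼
  | 0 => le_rfl
  | 1 => by decide
  | n + 2 => by
    rw [doubleFactorial_add_two, doubleFactorial_add_two (n + 1)]
    exact Nat.mul_le_mul (by omega) (doubleFactorial_le_succ n)

theorem two_pow_mul_factorial_le_doubleFactorial (k : ℕ) : 2 ^ k * k ! ≤ (2 * k + 1)‼ :=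
  doubleFactorial_two_mul k ▸ doubleFactorial_le_succ (2 * k)

end Nat

theorem summable_norm_odd_pow_div_doubleFactorial (x : ℝ) :
    Summable fun k : ℕ => ‖x ^ (2 * k + 1) / ((2 * k + 1)‼ : ℝ)‖ := by
  refine .of_nonneg_of_le (fun _ => norm_nonneg _) (fun k => ?_)
    ((Real.summable_pow_div_factorial (x ^ 2 / 2)).mul_left |x|)
  have hle : (2 ^ k * k ! : ℝ) ≤ (2 * k + 1)‼ := by
    exact_mod_cast Nat.two_pow_mul_factorial_le_doubleFactorial k
  calc ‖x ^ (2 * k + 1) / ((2 * k + 1)‼ : ℝ)‖ = |x| * (x ^ 2) ^ k / (2 * k + 1)‼ := by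
        rw [norm_div, norm_pow, Real.norm_eq_abs, Real.norm_natCast, pow_succ, pow_mul, sq_abs,
          mul_comm]
    _ ≤ |x| * (x ^ 2) ^ k / (2 ^ k * k !) := by gcongr
    _ = |x| * ((x ^ 2 / 2) ^ k / k !) := by rw [div_pow]; field_simp

theorem hasDerivAt_pow_mul_exp_neg_sq_div_two (k : ℕ) (t : ℝ) :
    HasDerivAt (fun t : ℝ => t ^ (2 * k + 1) * exp (-t ^ 2 / 2))
      ((2 * k + 1) * (t ^ (2 * k) * exp (-t ^ 2 / 2)) - t ^ (2 * (k + 1)) * exp (-t ^ 2 / 2))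
      t := by
  have hpow : HasDerivAt (fun t : ℝ => t ^ (2 * k + 1)) ((2 * k + 1 : ℝ) * t ^ (2 * k)) t := by
    simpa using hasDerivAt_pow (2 * k + 1) t
  have hexp : HasDerivAt (fun t : ℝ => exp (-t ^ 2 / 2)) (exp (-t ^ 2 / 2) * -t) t := by
    refine (((hasDerivAt_pow 2 t).fun_neg.div_const 2).exp).congr_deriv ?_
    push_cast
    ring
  exact (hpow.mul hexp).congr_deriv (by ring)

noncomputable def gaussPartialMoment (k : ℕ) (x : ℝ) : ℝ :=
  ∫ t in (0 : ℝ)..x, t ^ (2 * k) * exp (-t ^ 2 / 2)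

namespace gaussPartialMoment

theorem zero_eq (x : ℝ) : gaussPartialMoment 0 x = ∫ t in (0 : ℝ)..x, exp (-t ^ 2 / 2) := by
  simp [gaussPartialMoment]

theorem succ_eq (k : ℕ) (x : ℝ) :
    gaussPartialMoment (k + 1) x =
      (2 * k + 1) * gaussPartialMoment k x - x ^ (2 * k + 1) * exp (-x ^ 2 / 2) := by
  have hint (j : ℕ) : IntervalIntegrable (fun t : ℝ => t ^ (2 * j) * exp (-t ^ 2 / 2))
      MeasureTheory.volume 0 x := by
    apply Continuous.intervalIntegrable; fun_prop
  have hftc := intervalIntegral.integral_eq_sub_of_hasDerivAt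
    (fun t _ => hasDerivAt_pow_mul_exp_neg_sq_div_two k t)
    (((hint k).const_mul _).sub (hint (k + 1)))
  rw [intervalIntegral.integral_sub ((hint k).const_mul _) (hint (k + 1)),
    intervalIntegral.integral_const_mul] at hftc
  rw [zero_pow (by omega), zero_mul, sub_zero] at hftc
  simp only [gaussPartialMoment]
  linarith

theorem abs_le (k : ℕ) (x : ℝ) : |gaussPartialMoment k x| ≤ |x| ^ (2 * k + 1) := by
  have hbound : ∀ t ∈ Set.uIoc 0 x, ‖t ^ (2 * k) * exp (-t ^ 2 / 2)‖ ≤ |x| ^ (2 * k) := by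
    intro t ht
    have ht : |t| ≤ |x| := by simpa using Set.abs_sub_left_of_mem_uIcc (Set.uIoc_subset_uIcc ht)
    rw [norm_mul, norm_pow, Real.norm_eq_abs, Real.norm_of_nonneg (exp_pos _).le]
    calc |t| ^ (2 * k) * exp (-t ^ 2 / 2) ≤ |x| ^ (2 * k) * 1 := by
          gcongr
          rw [exp_le_one_iff]; nlinarith
      _ = |x| ^ (2 * k) := mul_one _
  have h := intervalIntegral.norm_integral_le_of_norm_le_const hbound
  rw [Real.norm_eq_abs, sub_zero] at h
  rwa [pow_succ]

theorem sum_range_succ_eq_sub (x : ℝ) (N : ℕ) :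
    ∑ k ∈ Finset.range (N + 1), x ^ (2 * k + 1) / ((2 * k + 1)‼ : ℝ) * exp (-x ^ 2 / 2) =
      gaussPartialMoment 0 x - gaussPartialMoment (N + 1) x / ((2 * N + 1)‼ : ℝ) := by
  induction N with
  | zero => simp [succ_eq 0 x]
  | succ N ih =>
    have hdf : ((2 * (N + 1) + 1)‼ : ℝ) = (2 * N + 3) * (2 * N + 1)‼ := by
      rw [show 2 * (N + 1) + 1 = 2 * N + 1 + 2 by ring, doubleFactorial_add_two]
      push_cast; ring
    have hpos : (0 : ℝ) < (2 * N + 1)‼ := by exact_mod_cast doubleFactorial_pos _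
    rw [Finset.sum_range_succ, ih, succ_eq (N + 1) x, hdf]
    field_simp
    push_cast
    ring

theorem tendsto_div_doubleFactorial (x : ℝ) :
    Tendsto (fun N : ℕ => gaussPartialMoment (N + 1) x / ((2 * N + 1)‼ : ℝ)) atTop
      (𝓝 0) := by
  have hterm :=
    (summable_norm_odd_pow_div_doubleFactorial x).tendsto_atTop_zero.const_mul (x ^ 2)
  rw [mul_zero] at hterm
  refine squeeze_zero_norm (fun N => ?_) hterm
  have hpos : (0 : ℝ) < (2 * N + 1)‼ := by exact_mod_cast doubleFactorial_pos _
  calc ‖gaussPartialMoment (N + 1) x / ((2 * N + 1)‼ : ℝ)‖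
      ≤ |x| ^ (2 * (N + 1) + 1) / (2 * N + 1)‼ := by
        rw [norm_div, Real.norm_of_nonneg hpos.le, Real.norm_eq_abs]
        gcongr
        exact abs_le (N + 1) x
    _ = x ^ 2 * ‖x ^ (2 * N + 1) / ((2 * N + 1)‼ : ℝ)‖ := by
        rw [norm_div, norm_pow, Real.norm_eq_abs, Real.norm_of_nonneg hpos.le, ← sq_abs x]
        ring

end gaussPartialMoment

theorem hasSum_odd_pow_div_doubleFactorial_mul_exp (x : ℝ) :
    HasSum (fun k : ℕ => x ^ (2 * k + 1) / ((2 * k + 1)‼ : ℝ) * exp (-x ^ 2 / 2))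
      (gaussPartialMoment 0 x) := by
  have hnorm : Summable fun k : ℕ =>
      ‖x ^ (2 * k + 1) / ((2 * k + 1)‼ : ℝ) * exp (-x ^ 2 / 2)‖ := by
    simpa only [norm_mul] using
      (summable_norm_odd_pow_div_doubleFactorial x).mul_right ‖exp (-x ^ 2 / 2)‖
  rw [hasSum_iff_tendsto_nat_of_summable_norm hnorm, ← tendsto_add_atTop_iff_nat 1]
  have hrem :=
    (gaussPartialMoment.tendsto_div_doubleFactorial x).const_sub (gaussPartialMoment 0 x)
  simp_rw [gaussPartialMoment.sum_range_succ_eq_sub x]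
  simpa using hrem

theorem dawson_like_series (x : ℝ) :
    HasSum (fun k : ℕ => x ^ (2 * k + 1) / ((2 * k + 1)‼ : ℝ))
      (Real.exp (x ^ 2 / 2) * ∫ t in (0:ℝ)..x, Real.exp (-t ^ 2 / 2)) := by
  have hcancel : exp (x ^ 2 / 2) * exp (-x ^ 2 / 2) = 1 := by
    rw [← exp_add, neg_div, add_neg_cancel, exp_zero]
  have h := (hasSum_odd_pow_div_doubleFactorial_mul_exp x).mul_left (exp (x ^ 2 / 2))
  rw [gaussPartialMoment.zero_eq] at h
  simp only [mul_left_comm (exp (x ^ 2 / 2)), hcancel, mul_one] at h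
  exact h
end

section
/- For all real x, the ratio Φ(x)/φ(x) equals Σ_{k=0}^∞ x^{2k+1}/(2k+1)!! + (√(2π)/2)·Σ_{k=0}^∞ x^{2k}/(2k)!!, with both series converging everywhere. -/
open Real Nat MeasureTheory

/-!
Since `(2k)‼ = 2ᵏ k!`, the even series is `exp (x²/2)`. Differentiating the odd series `f`
termwise (justified by `(2k+1)‼ ≥ (2k)‼`) gives `f' = 1 + x f`, so `exp (-x²/2) f` is the primitive
of `exp (-x²/2)` vanishing at `0`. Adding the half Gaussian integral `∫_{-∞}^0 = √(2π)/2` and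
dividing by `exp (-x²/2)` gives the claim.
-/

theorem Nat.doubleFactorial_le_succ_s2 : ∀ n : ℕ, n‼ ≤ (n + 1)‼
  | 0 => le_rfl
  | 1 => by decide
  | n + 2 => by
    rw [doubleFactorial_add_two, doubleFactorial_add_two (n + 1)]
    exact Nat.mul_le_mul (by omega) (doubleFactorial_le_succ_s2 n)

lemma pow_two_mul_div_doubleFactorial (x : ℝ) (k : ℕ) :
    x ^ (2 * k) / ((2 * k)‼ : ℝ) = (x ^ 2 / 2) ^ k / k ! := by
  rw [doubleFactorial_two_mul, pow_mul, div_pow, div_div]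
  push_cast
  rfl

lemma hasSum_pow_two_mul_div_doubleFactorial (x : ℝ) :
    HasSum (fun k : ℕ => x ^ (2 * k) / ((2 * k)‼ : ℝ)) (exp (x ^ 2 / 2)) := by
  simpa only [pow_two_mul_div_doubleFactorial, Real.exp_eq_exp_ℝ]
    using NormedSpace.expSeries_div_hasSum_exp (x ^ 2 / 2)

lemma pow_two_mul_div_doubleFactorial_succ_le (x : ℝ) (k : ℕ) :
    x ^ (2 * k) / ((2 * k + 1)‼ : ℝ) ≤ x ^ (2 * k) / ((2 * k)‼ : ℝ) := by
  gcongr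
  · exact (even_two_mul k).pow_nonneg x
  · exact doubleFactorial_le_succ_s2 _

lemma summable_pow_two_mul_add_one_div_doubleFactorial (x : ℝ) :
    Summable (fun k : ℕ => x ^ (2 * k + 1) / ((2 * k + 1)‼ : ℝ)) := by
  refine .of_norm_bounded ((hasSum_pow_two_mul_div_doubleFactorial x).summable.mul_left |x|)
    fun k => ?_
  have hnonneg : 0 ≤ x ^ (2 * k) / ((2 * k + 1)‼ : ℝ) := by
    have := (even_two_mul k).pow_nonneg x
    positivity
  calc ‖x ^ (2 * k + 1) / ((2 * k + 1)‼ : ℝ)‖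
      = |x| * (x ^ (2 * k) / ((2 * k + 1)‼ : ℝ)) := by
        rw [Real.norm_eq_abs, _root_.pow_succ', mul_div_assoc, abs_mul, abs_of_nonneg hnonneg]
    _ ≤ |x| * (x ^ (2 * k) / ((2 * k)‼ : ℝ)) :=
        mul_le_mul_of_nonneg_left (pow_two_mul_div_doubleFactorial_succ_le x k) (abs_nonneg x)

lemma norm_two_mul_add_one_mul_pow_div_doubleFactorial_le {y R : ℝ} (hy : |y| ≤ R) (k : ℕ) :
    ‖(2 * k + 1) * y ^ (2 * k) / ((2 * k + 1)‼ : ℝ)‖ ≤ (3 * (R ^ 2 / 2)) ^ k / k ! := by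
  have hpow : 0 ≤ y ^ (2 * k) := (even_two_mul k).pow_nonneg y
  -- Bernoulli's inequality; it turns the bound into the exponential series of `3 R² / 2`.
  have hthree : (2 * k + 1 : ℝ) ≤ 3 ^ k := by
    have := one_add_mul_le_pow (a := (2 : ℝ)) (by norm_num) k
    norm_num at this
    linarith
  have hsq : y ^ 2 ≤ R ^ 2 := sq_le_sq' (abs_le.mp hy).1 (abs_le.mp hy).2
  calc ‖(2 * k + 1) * y ^ (2 * k) / ((2 * k + 1)‼ : ℝ)‖
      = (2 * k + 1) * (y ^ (2 * k) / ((2 * k + 1)‼ : ℝ)) := by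
        rw [mul_div_assoc, Real.norm_eq_abs, abs_of_nonneg (by positivity)]
    _ ≤ 3 ^ k * (y ^ (2 * k) / ((2 * k)‼ : ℝ)) :=
        mul_le_mul hthree (pow_two_mul_div_doubleFactorial_succ_le y k) (by positivity)
          (by positivity)
    _ ≤ 3 ^ k * ((R ^ 2 / 2) ^ k / k !) := by
        rw [pow_two_mul_div_doubleFactorial]
        gcongr
    _ = (3 * (R ^ 2 / 2)) ^ k / k ! := by rw [mul_pow, mul_div_assoc]

noncomputable def oddSeries (x : ℝ) : ℝ := ∑' k : ℕ, x ^ (2 * k + 1) / ((2 * k + 1)‼ : ℝ)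

lemma hasSum_two_mul_add_one_mul_pow_div_doubleFactorial (y : ℝ) :
    HasSum (fun k : ℕ => (2 * k + 1) * y ^ (2 * k) / ((2 * k + 1)‼ : ℝ))
      (1 + y * oddSeries y) := by
  have hshift : ∀ k : ℕ, (2 * ((k + 1 : ℕ) : ℝ) + 1) * y ^ (2 * (k + 1)) / ((2 * (k + 1) + 1)‼ : ℝ)
      = y * (y ^ (2 * k + 1) / ((2 * k + 1)‼ : ℝ)) := by
    intro k
    rw [show 2 * (k + 1) + 1 = 2 * k + 1 + 2 by ring, doubleFactorial_add_two]
    have : ((2 * k + 1)‼ : ℝ) ≠ 0 := by positivity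
    push_cast
    field_simp
    ring
  have h : HasSum (fun k : ℕ => (2 * ((k + 1 : ℕ) : ℝ) + 1) * y ^ (2 * (k + 1)) /
      ((2 * (k + 1) + 1)‼ : ℝ)) (y * oddSeries y) := by
    rw [funext hshift]
    exact (summable_pow_two_mul_add_one_div_doubleFactorial y).hasSum.mul_left y
  simpa using h.zero_add (f := fun k : ℕ => (2 * k + 1) * y ^ (2 * k) / ((2 * k + 1)‼ : ℝ))

lemma hasDerivAt_pow_two_mul_add_one_div_doubleFactorial (k : ℕ) (y : ℝ) :
    HasDerivAt (fun z : ℝ => z ^ (2 * k + 1) / ((2 * k + 1)‼ : ℝ))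
      ((2 * k + 1) * y ^ (2 * k) / ((2 * k + 1)‼ : ℝ)) y := by
  simpa using (hasDerivAt_pow (2 * k + 1) y).div_const ((2 * k + 1)‼ : ℝ)

lemma hasDerivAt_oddSeries (y : ℝ) : HasDerivAt oddSeries (1 + y * oddSeries y) y := by
  set R := |y| + 1
  have hball : ∀ z ∈ Metric.ball (0 : ℝ) R, |z| ≤ R := fun z hz =>
    (mem_ball_zero_iff.mp hz).le
  have h := hasDerivAt_tsum_of_isPreconnected
    (summable_pow_div_factorial (3 * (R ^ 2 / 2))) Metric.isOpen_ball
    (convex_ball 0 R).isPreconnected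
    (fun k z _ => hasDerivAt_pow_two_mul_add_one_div_doubleFactorial k z)
    (fun k z hz => norm_two_mul_add_one_mul_pow_div_doubleFactorial_le (hball z hz) k)
    (Metric.mem_ball_self (by positivity))
    (summable_pow_two_mul_add_one_div_doubleFactorial 0)
    (show y ∈ Metric.ball 0 R by simp [R])
  rwa [(hasSum_two_mul_add_one_mul_pow_div_doubleFactorial y).tsum_eq] at h

lemma hasDerivAt_exp_neg_sq_div_two_mul_oddSeries (y : ℝ) :
    HasDerivAt (fun t => exp (-t ^ 2 / 2) * oddSeries t) (exp (-y ^ 2 / 2)) y := by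
  have hexp : HasDerivAt (fun t : ℝ => exp (-t ^ 2 / 2)) (-y * exp (-y ^ 2 / 2)) y := by
    have hq : HasDerivAt (fun t : ℝ => -t ^ 2 / 2) (-y) y :=
      ((hasDerivAt_pow 2 y).neg.div_const 2).congr_deriv (by norm_num; ring)
    simpa [mul_comm] using hq.exp
  exact (hexp.mul (hasDerivAt_oddSeries y)).congr_deriv (by ring)

lemma intervalIntegral_exp_neg_sq_div_two (x : ℝ) :
    ∫ t in (0 : ℝ)..x, exp (-t ^ 2 / 2) = exp (-x ^ 2 / 2) * oddSeries x := by
  rw [intervalIntegral.integral_eq_sub_of_hasDerivAt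
    (fun y _ => hasDerivAt_exp_neg_sq_div_two_mul_oddSeries y)
    ((by fun_prop : Continuous fun t : ℝ => exp (-t ^ 2 / 2)).intervalIntegrable _ _)]
  simp [oddSeries]

lemma integrable_exp_neg_sq_div_two : Integrable fun t : ℝ => exp (-t ^ 2 / 2) := by
  simpa [neg_div, div_eq_inv_mul] using integrable_exp_neg_mul_sq (b := 1 / 2) (by norm_num)

lemma integral_Iic_zero_exp_neg_sq_div_two :
    ∫ t in Set.Iic (0 : ℝ), exp (-t ^ 2 / 2) = √(2 * π) / 2 := by
  have h := integral_comp_neg_Iic 0 fun t : ℝ => exp (-(1 / 2) * t ^ 2)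
  simp only [neg_sq, neg_zero, integral_gaussian_Ioi] at h
  convert h using 3
  · ring_nf
  · field_simp

lemma integral_Iic_exp_neg_sq_div_two (x : ℝ) :
    ∫ t in Set.Iic x, exp (-t ^ 2 / 2) = √(2 * π) / 2 + exp (-x ^ 2 / 2) * oddSeries x := by
  rw [← integral_Iic_zero_exp_neg_sq_div_two, ← intervalIntegral_exp_neg_sq_div_two,
    ← intervalIntegral.integral_Iic_sub_Iic integrable_exp_neg_sq_div_two.integrableOn
      integrable_exp_neg_sq_div_two.integrableOn]
  ring

theorem Phi_div_phi_series (x : ℝ) :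
    Summable (fun k : ℕ => x ^ (2 * k + 1) / ((2 * k + 1)‼ : ℝ)) ∧
    Summable (fun k : ℕ => x ^ (2 * k) / ((2 * k)‼ : ℝ)) ∧
    (∫ t in Set.Iic x, Real.exp (-t ^ 2 / 2)) / Real.exp (-x ^ 2 / 2) =
      (∑' k : ℕ, x ^ (2 * k + 1) / ((2 * k + 1)‼ : ℝ)) +
        Real.sqrt (2 * π) / 2 * ∑' k : ℕ, x ^ (2 * k) / ((2 * k)‼ : ℝ) := by
  have heven := hasSum_pow_two_mul_div_doubleFactorial x
  refine ⟨summable_pow_two_mul_add_one_div_doubleFactorial x, heven.summable, ?_⟩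
  rw [integral_Iic_exp_neg_sq_div_two, heven.tsum_eq, ← oddSeries, neg_div, exp_neg]
  field_simp
  ring
end

section
/- For every odd natural number m, ∫₀^π φ²·cosᵐ(φ)·sin(φ) dφ = (π²/(m+1))·(m!!/(m+1)!! − 1). -/
/-!
Integrating by parts against the antiderivative `-cos t ^ (m + 1) / (m + 1)` of
`cos t ^ m * sin t` reduces the integral to `∫ t * cos t ^ (m + 1)`. As `m + 1` is even,
`cos ^ (m + 1)` is invariant under `t ↦ π - t`, so this is `π / 2` times the Wallis integral
`∫₀^π cos ^ (m + 1) = π * m‼ / (m + 1)‼`.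
-/

open Real Nat

theorem integral_cos_pow_succ_of_odd {m : ℕ} (hm : Odd m) :
    ∫ x in (0:ℝ)..π, cos x ^ (m + 1) = π * (m‼ / (m + 1)‼ : ℝ) := by
  obtain ⟨k, rfl⟩ := hm
  induction k with
  | zero => simp [integral_cos_pow (n := 0), mul_comm]
  | succ k ih =>
    have hnum : (2 * (k + 1) + 1)‼ = (2 * k + 3) * (2 * k + 1)‼ := Nat.doubleFactorial_add_two _
    have hden : (2 * (k + 1) + 1 + 1)‼ = (2 * k + 4) * (2 * k + 1 + 1)‼ :=
      Nat.doubleFactorial_add_two (2 * k + 2)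
    have hden_ne : ((2 * k + 1 + 1)‼ : ℝ) ≠ 0 := by positivity
    have hexp : 2 * (k + 1) + 1 + 1 = (2 * k + 1 + 1) + 2 := by ring
    rw [hexp, integral_cos_pow, ih, ← hexp, hnum, hden]
    simp only [sin_pi, sin_zero, mul_zero, sub_zero, zero_div, zero_add]
    push_cast
    field_simp
    ring

theorem integral_mul_id_of_symmetric {f : ℝ → ℝ} {a b : ℝ} (hf : Continuous f)
    (hsymm : ∀ x, f (a + b - x) = f x) :
    ∫ x in a..b, x * f x = (a + b) / 2 * ∫ x in a..b, f x := by
  have hreflect : ∫ x in a..b, x * f x = ∫ x in a..b, (a + b - x) * f x := by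
    have := intervalIntegral.integral_comp_sub_left (fun x => x * f x) (a := a) (b := b) (a + b)
    simp only [hsymm, add_sub_cancel_left, add_sub_cancel_right] at this
    exact this.symm
  rw [intervalIntegral.integral_congr (fun x _ => sub_mul (a + b) x (f x)),
    intervalIntegral.integral_sub ((hf.const_mul _).intervalIntegrable _ _)
      ((by fun_prop : Continuous fun x => x * f x).intervalIntegrable a b),
    intervalIntegral.integral_const_mul] at hreflect
  linarith

theorem integral_sq_mul_cos_pow_mul_sin (m : ℕ) (a b : ℝ) :
    ∫ t in a..b, t ^ 2 * cos t ^ m * sin t =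
      (a ^ 2 * cos a ^ (m + 1) - b ^ 2 * cos b ^ (m + 1)) / (m + 1) +
        2 / (m + 1) * ∫ t in a..b, t * cos t ^ (m + 1) := by
  have hm : (m : ℝ) + 1 ≠ 0 := by positivity
  have hu : ∀ x ∈ Set.uIcc a b, HasDerivAt (fun t : ℝ => t ^ 2) (2 * x) x := fun x _ => by
    simpa using hasDerivAt_pow 2 x
  have hv : ∀ x ∈ Set.uIcc a b,
      HasDerivAt (fun t => -cos t ^ (m + 1) / (m + 1)) (cos x ^ m * sin x) x := fun x _ => by
    refine (((hasDerivAt_cos x).fun_pow (m + 1)).fun_neg.div_const ((m : ℝ) + 1)).congr_deriv ?_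
    rw [Nat.add_sub_cancel]
    push_cast
    field_simp
  have H := intervalIntegral.integral_mul_deriv_eq_deriv_mul hu hv
    ((continuous_const.mul continuous_id).intervalIntegrable _ _)
    ((by fun_prop : Continuous fun x => cos x ^ m * sin x).intervalIntegrable _ _)
  simp only [mul_assoc] at H ⊢
  have hswap : ∫ t in a..b, 2 * (t * (-cos t ^ (m + 1) / (m + 1))) =
      -∫ t in a..b, 2 / (m + 1) * (t * cos t ^ (m + 1)) := by
    rw [← intervalIntegral.integral_neg]
    congr with t
    ring
  rw [H, hswap, intervalIntegral.integral_const_mul]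
  ring

theorem J_odd (m : ℕ) (hm : Odd m) :
    ∫ t in (0:ℝ)..π, t ^ 2 * Real.cos t ^ m * Real.sin t =
      π ^ 2 / (m + 1) * ((m‼ : ℝ) / ((m + 1)‼ : ℝ) - 1) := by
  have hcos : cos π ^ (m + 1) = 1 := by
    rw [cos_pi, (hm.add_one).neg_one_pow]
  rw [integral_sq_mul_cos_pow_mul_sin, integral_mul_id_of_symmetric (by fun_prop)
      (fun x => by rw [zero_add, cos_pi_sub, hm.add_one.neg_pow]),
    integral_cos_pow_succ_of_odd hm, hcos]
  have : (m : ℝ) + 1 ≠ 0 := by positivity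
  field_simp
  ring
end

section
/- For every odd natural number k ≥ 3, the central-type binomial coefficient satisfies C(k+2, (k+1)/2) ≤ √(2/π)·2^{k+2}/√(k+2). -/
/-! Wallis' inequality `π/2 · (2n+1)/(2n+2) ≤ W n`, with `W n = 16^n / (C(2n,n)^2 (2n+1))`, gives
`π n C(2n,n)^2 ≤ 16^n`. Every binomial coefficient `C(N,i)` is at most the middle one, which is
`C(2m,m)` for `N = 2m` and `C(2m+2,m+1)/2` for `N = 2m+1`; either way `π N C(N,i)^2 ≤ 2 · 4^N`. -/
open Real Nat

namespace Real.Wallis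

theorem W_eq_sixteen_pow_div_centralBinom_sq (n : ℕ) :
    W n = 16 ^ n / ((centralBinom n : ℝ) ^ 2 * (2 * n + 1)) := by
  have hfac : ((2 * n)! : ℝ) = centralBinom n * n ! * n ! := by
    rw [centralBinom_eq_two_mul_choose, two_mul]
    exact_mod_cast (add_choose_mul_factorial_mul_factorial n n).symm
  rw [W_eq_factorial_ratio, hfac, pow_mul]
  have : (n ! : ℝ) ≠ 0 := by positivity
  field_simp
  norm_num

end Real.Wallis

namespace Nat

open Real.Wallis in
theorem pi_mul_mul_centralBinom_sq_le (n : ℕ) : π * n * (centralBinom n : ℝ) ^ 2 ≤ 16 ^ n := by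
  have hC : (0 : ℝ) < centralBinom n := mod_cast centralBinom_pos n
  have hW := le_W n
  rw [W_eq_sixteen_pow_div_centralBinom_sq, le_div_iff₀ (by positivity)] at hW
  refine le_trans ?_ hW
  rw [div_mul_eq_mul_div, div_mul_eq_mul_div, le_div_iff₀ (by positivity)]
  -- Wallis' lower bound loses a factor `(2n+1)/(2n+2)`, absorbed by `4n(n+1) ≤ (2n+1)^2`.
  nlinarith [mul_pos pi_pos (pow_pos hC 2)]

theorem pi_mul_mul_choose_sq_le (n i : ℕ) : π * n * (n.choose i : ℝ) ^ 2 ≤ 2 * 4 ^ n := by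
  obtain ⟨m, rfl | rfl⟩ := n.even_or_odd'
  · have hle : ((2 * m).choose i : ℝ) ≤ centralBinom m := mod_cast choose_le_centralBinom i m
    calc π * ↑(2 * m) * ((2 * m).choose i : ℝ) ^ 2 = 2 * (π * m * ((2 * m).choose i : ℝ) ^ 2) := by
          push_cast; ring
      _ ≤ 2 * (π * m * (centralBinom m : ℝ) ^ 2) := by gcongr
      _ ≤ 2 * 16 ^ m := by grw [pi_mul_mul_centralBinom_sq_le]
      _ = 2 * 4 ^ (2 * m) := by rw [pow_mul]; norm_num
  · have hmid : ((2 * m + 1).choose i : ℝ) ≤ (2 * m + 1).choose m := by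
      have := choose_le_middle i (2 * m + 1)
      rwa [show (2 * m + 1) / 2 = m by omega, ← Nat.cast_le (α := ℝ)] at this
    have hhalf : (centralBinom (m + 1) : ℝ) = 2 * (2 * m + 1).choose m := by
      rw [centralBinom_eq_two_mul_choose, show 2 * (m + 1) = 2 * m + 1 + 1 by ring, choose_succ_succ,
        choose_symm_half]
      push_cast; ring
    calc π * ↑(2 * m + 1) * ((2 * m + 1).choose i : ℝ) ^ 2
        ≤ π * ↑(2 * m + 2) * ((2 * m + 1).choose m : ℝ) ^ 2 := by gcongr; omega
      _ = (π * ↑(m + 1) * (centralBinom (m + 1) : ℝ) ^ 2) / 2 := by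
          rw [hhalf]; push_cast; ring
      _ ≤ 16 ^ (m + 1) / 2 := by grw [pi_mul_mul_centralBinom_sq_le]
      _ = 2 * 4 ^ (2 * m + 1) := by rw [pow_succ, pow_succ, pow_mul]; norm_num; ring

theorem choose_le_sqrt_two_div_pi_mul_two_pow_div_sqrt (n i : ℕ) (hn : n ≠ 0) :
    (n.choose i : ℝ) ≤ √(2 / π) * 2 ^ n / √n := by
  have hsq : (n.choose i : ℝ) ^ 2 ≤ 2 / π * (2 ^ n) ^ 2 / n := by
    rw [← pow_mul, mul_comm n 2, pow_mul, div_mul_eq_mul_div, div_div, le_div_iff₀ (by positivity)]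
    norm_num
    linarith [pi_mul_mul_choose_sq_le n i]
  calc (n.choose i : ℝ) ≤ √(2 / π * (2 ^ n) ^ 2 / n) := Real.le_sqrt_of_sq_le hsq
    _ = √(2 / π) * 2 ^ n / √n := by
      rw [sqrt_div' _ n.cast_nonneg, sqrt_mul (by positivity), sqrt_sq (by positivity)]

end Nat

theorem central_binom_upper_bound_general (k : ℕ) :
    ((k + 2).choose ((k + 1) / 2) : ℝ) ≤
      Real.sqrt (2 / π) * 2 ^ (k + 2) / Real.sqrt (k + 2) := by
  exact_mod_cast choose_le_sqrt_two_div_pi_mul_two_pow_div_sqrt (k + 2) ((k + 1) / 2) (by omega)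

theorem central_binom_upper_bound (k : ℕ) (hk : Odd k) (hk3 : 3 ≤ k) :
    ((k + 2).choose ((k + 1) / 2) : ℝ) ≤
      Real.sqrt (2 / π) * 2 ^ (k + 2) / Real.sqrt (k + 2) :=
  central_binom_upper_bound_general k
end
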